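/- For any ε > 0, L ∈ ℕ and an increasing function f : (0,1) → ℝ with f(t) > 0 and ∫₀¹ f(t)/t dt = ∞, the infinite product ∏_{k=1}^∞ (1 - ε·2^{-L}·f(3^{-N-kL})) equals 0 for every N ∈ ℕ. -/
import Mathlib


open Set Filter
open scoped Topology

private lemma stmt9_tail_top (g : ℕ → ENNReal) (hb : ∀ m, g m ≤ 1) (h : ∑' m, g m = ⊤) :
    ∀ n, ∑' m, g (n + m) = ⊤ := by
  intro n
  induction n with
  | zero => simpa using h
  | succ n ih =>
    have h1 : ∑' m, g (n + m) = g (n + 0) + ∑' m, g (n + (m + 1)) :=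
      tsum_eq_zero_add' ENNReal.summable
    have h2 : (fun m => g (n + (m + 1))) = fun m => g ((n + 1) + m) := by
      funext m; congr 1; omega
    rw [h2] at h1
    rw [h1] at ih
    rcases ENNReal.add_eq_top.mp ih with h | h
    · exact absurd h (by simpa using ((hb (n+0)).trans_lt ENNReal.one_lt_top).ne)
    · exact h

/-- If `f : (0,1) → (0,1)` is increasing with `∫₀¹ f(t)/t dt = ∞`, then for any
`0 < ε ≤ 1`, `L ∈ ℕ_{≥1}` and `N ∈ ℕ`, the infinite product
`∏_{k=1}^∞ (1 - ε·2^{-L}·f(3^{-N-kL}))` equals `0`. -/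
theorem stmt_9 (f : ℝ → ℝ)
    (hmono : MonotoneOn f (Ioo (0:ℝ) 1))
    (hpos : ∀ t ∈ Ioo (0:ℝ) 1, 0 < f t)
    (hlt1 : ∀ t ∈ Ioo (0:ℝ) 1, f t < 1)
    (hdiv : (∫⁻ t in Ioo (0:ℝ) 1, ENNReal.ofReal (f t / t)) = ⊤)
    (ε : ℝ) (hε : 0 < ε) (hε1 : ε ≤ 1) (L : ℕ) (hL : 0 < L) (N : ℕ) :
    Tendsto (fun n : ℕ => ∏ k ∈ Finset.range n,
        (1 - ε * 2 ^ (-(L:ℝ)) * f (3 ^ (-(N:ℝ) - ((k:ℝ) + 1) * L))))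
      atTop (𝓝 0) := by
  classical
  set c : ℝ := ε * 2 ^ (-(L:ℝ)) with hc
  have hc0 : 0 < c := mul_pos hε (Real.rpow_pos_of_pos two_pos _)
  have h2L : (2:ℝ) ^ (-(L:ℝ)) ≤ 1 :=
    Real.rpow_le_one_of_one_le_of_nonpos one_le_two (neg_nonpos.mpr (Nat.cast_nonneg L))
  have hc1 : c ≤ 1 := by
    calc c ≤ 1 * 1 := mul_le_mul hε1 h2L (by positivity) zero_le_one
    _ = 1 := one_mul 1
  -- the geometric sequence 3^{-m}
  set b : ℕ → ℝ := fun m => (3:ℝ)⁻¹ ^ m with hbdef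
  have hb_pos : ∀ m, 0 < b m := fun m => pow_pos (by norm_num) m
  have hb_le1 : ∀ m, b m ≤ 1 := fun m => pow_le_one₀ (by norm_num) (by norm_num)
  have hb_lt1 : ∀ m, 1 ≤ m → b m < 1 := fun m hm =>
    pow_lt_one₀ (by norm_num) (by norm_num) (by omega)
  have hb_mem : ∀ m, 1 ≤ m → b m ∈ Ioo (0:ℝ) 1 := fun m hm => ⟨hb_pos m, hb_lt1 m hm⟩
  have hb_anti : ∀ m m' : ℕ, m ≤ m' → b m' ≤ b m := fun m m' h =>
    pow_le_pow_of_le_one (by norm_num) (by norm_num) h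
  -- A m : ℝ≥0∞ value of f at b m
  set A : ℕ → ENNReal := fun m => ENNReal.ofReal (f (b m)) with hAdef
  have hA_le : ∀ m, 1 ≤ m → A m ≤ 1 := by
    intro m hm
    simp only [hAdef]
    rw [show (1:ENNReal) = ENNReal.ofReal 1 by simp]
    exact ENNReal.ofReal_le_ofReal (hlt1 _ (hb_mem m hm)).le
  have hA_anti : ∀ m m' : ℕ, 1 ≤ m → m ≤ m' → A m' ≤ A m := by
    intro m m' hm hmm'
    exact ENNReal.ofReal_le_ofReal
      (hmono (hb_mem m' (hm.trans hmm')) (hb_mem m hm) (hb_anti m m' hmm'))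
  -- pointwise bound B
  set B : ℕ → ℝ := fun m => if m = 0 then 1 else f (b m) with hBdef
  have hB_nonneg : ∀ m, 0 ≤ B m := by
    intro m
    simp only [hBdef]
    split
    · norm_num
    · next h => exact (hpos _ (hb_mem m (by omega))).le
  -- Step 1: cover (0,1) by the Ico intervals
  have hcover : Ioo (0:ℝ) 1 ⊆ ⋃ m : ℕ, Ico (b (m+1)) (b m) := by
    intro t ht
    obtain ⟨n, hn⟩ := exists_pow_lt_of_lt_one ht.1 (show (3:ℝ)⁻¹ < 1 by norm_num)
    have hP : ∃ k, b k ≤ t := ⟨n, hn.le⟩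
    have hk : b (Nat.find hP) ≤ t := Nat.find_spec hP
    have hk0 : Nat.find hP ≠ 0 := by
      intro h
      rw [h] at hk
      simp only [hbdef, pow_zero] at hk
      linarith [ht.2]
    obtain ⟨m, hm⟩ : ∃ m, Nat.find hP = m + 1 := ⟨Nat.find hP - 1, by omega⟩
    refine mem_iUnion.2 ⟨m, ?_, ?_⟩
    · rw [← hm]; exact hk
    · exact lt_of_not_ge (Nat.find_min hP (by omega))
  -- Step 2: bound on each interval
  have hbound : ∀ m : ℕ, (∫⁻ t in Ico (b (m+1)) (b m), ENNReal.ofReal (f t / t)) ≤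
      ENNReal.ofReal (2 * B m) := by
    intro m
    have key : ∀ t ∈ Ico (b (m+1)) (b m),
        ENNReal.ofReal (f t / t) ≤ ENNReal.ofReal (B m * 3 ^ (m+1)) := by
      intro t ht
      have ht0 : 0 < t := lt_of_lt_of_le (hb_pos _) ht.1
      have ht1 : t < 1 := lt_of_lt_of_le ht.2 (hb_le1 m)
      have hft : f t ≤ B m := by
        simp only [hBdef]
        split
        · exact (hlt1 t ⟨ht0, ht1⟩).le
        · next h =>
          exact hmono ⟨ht0, ht1⟩ (hb_mem m (by omega)) ht.2.le
      have hdivle : f t / t ≤ B m / b (m+1) :=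
        div_le_div₀ (hB_nonneg m) hft (hb_pos (m+1)) ht.1
      have heq : B m / b (m+1) = B m * 3 ^ (m+1) := by
        simp only [hbdef]
        rw [div_eq_mul_inv, inv_pow, inv_inv]
      exact ENNReal.ofReal_le_ofReal (by rw [← heq]; exact hdivle)
    calc (∫⁻ t in Ico (b (m+1)) (b m), ENNReal.ofReal (f t / t))
        ≤ ∫⁻ _ in Ico (b (m+1)) (b m), ENNReal.ofReal (B m * 3 ^ (m+1)) :=
          MeasureTheory.setLIntegral_mono measurable_const key
      _ = ENNReal.ofReal (B m * 3 ^ (m+1)) * MeasureTheory.volume (Ico (b (m+1)) (b m)) :=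
          MeasureTheory.setLIntegral_const _ _
      _ ≤ ENNReal.ofReal (2 * B m) := by
          rw [Real.volume_Ico,
            ← ENNReal.ofReal_mul (mul_nonneg (hB_nonneg m) (by positivity))]
          apply ENNReal.ofReal_le_ofReal
          have h3 : (3:ℝ) ^ (m+1) * (3:ℝ)⁻¹ ^ (m+1) = 1 := by
            rw [← mul_pow]; norm_num
          have hbm : b m - b (m+1) = 2 * (3:ℝ)⁻¹ ^ (m+1) := by
            simp only [hbdef, pow_succ]
            ring
          rw [hbm]
          have heq2 : B m * 3 ^ (m+1) * (2 * (3:ℝ)⁻¹ ^ (m+1)) = 2 * B m := by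
            calc B m * 3 ^ (m+1) * (2 * (3:ℝ)⁻¹ ^ (m+1))
                = 2 * B m * ((3:ℝ) ^ (m+1) * (3:ℝ)⁻¹ ^ (m+1)) := by ring
              _ = 2 * B m := by rw [h3, mul_one]
          exact le_of_eq heq2
  -- Step 3: the series ∑ B m diverges in ℝ≥0∞
  have hsumB : ∑' m : ℕ, ENNReal.ofReal (2 * B m) = ⊤ := by
    rw [eq_top_iff, ← hdiv]
    calc (∫⁻ t in Ioo (0:ℝ) 1, ENNReal.ofReal (f t / t))
        ≤ ∫⁻ t in ⋃ m : ℕ, Ico (b (m+1)) (b m), ENNReal.ofReal (f t / t) :=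
          MeasureTheory.lintegral_mono_set hcover
      _ ≤ ∑' m : ℕ, ∫⁻ t in Ico (b (m+1)) (b m), ENNReal.ofReal (f t / t) :=
          MeasureTheory.lintegral_iUnion_le _ _
      _ ≤ ∑' m : ℕ, ENNReal.ofReal (2 * B m) := ENNReal.tsum_le_tsum hbound
  have hsumB' : ∑' m : ℕ, ENNReal.ofReal (B m) = ⊤ := by
    by_contra h
    have h2 : ∀ m : ℕ, ENNReal.ofReal (2 * B m) = 2 * ENNReal.ofReal (B m) := by
      intro m
      rw [ENNReal.ofReal_mul (by norm_num)]
      norm_num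
    simp only [h2] at hsumB
    rw [ENNReal.tsum_mul_left] at hsumB
    exact ENNReal.mul_ne_top (by norm_num) h hsumB
  -- Step 4: ∑ A (m+1) = ⊤
  have hsumA : ∑' m : ℕ, A (m + 1) = ⊤ := by
    have hsplit : ∑' m : ℕ, ENNReal.ofReal (B m) =
        ENNReal.ofReal (B 0) + ∑' m : ℕ, ENNReal.ofReal (B (m + 1)) :=
      tsum_eq_zero_add' ENNReal.summable
    have hB0 : ENNReal.ofReal (B 0) = 1 := by simp [hBdef]
    have hBA : ∀ m : ℕ, ENNReal.ofReal (B (m + 1)) = A (m + 1) := by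
      intro m; simp [hBdef, hAdef]
    rw [hsplit, hB0] at hsumB'
    simp only [hBA] at hsumB'
    rcases ENNReal.add_eq_top.mp hsumB' with h | h
    · exact absurd h ENNReal.one_ne_top
    · exact h
  -- Step 5: tail of the series still diverges
  have htail : ∑' m : ℕ, A (N + L + m) = ⊤ := by
    have := stmt9_tail_top (fun m => A (m + 1)) (fun m => hA_le (m + 1) (by omega))
      hsumA (N + L - 1)
    have hidx : (fun m : ℕ => A ((N + L - 1) + m + 1)) = fun m : ℕ => A (N + L + m) := by
      funext m; congr 1; omega
    simpa [hidx] using this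
  -- Step 6: grouping in blocks of length L
  haveI : NeZero L := ⟨hL.ne'⟩
  set S : ENNReal := ∑' k : ℕ, A (N + (k + 1) * L) with hSdef
  have hS : S = ⊤ := by
    by_contra hS
    have hgroup : ∑' m : ℕ, A (N + L + m) ≤ (L : ENNReal) * S := by
      calc ∑' m : ℕ, A (N + L + m)
          = ∑' p : ℕ × Fin L, A (N + L + ((Nat.divModEquiv L).symm p)) :=
            ((Nat.divModEquiv L).symm.tsum_eq (fun m => A (N + L + m))).symm
        _ ≤ ∑' p : ℕ × Fin L, A (N + (p.1 + 1) * L) := by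
            apply ENNReal.tsum_le_tsum
            intro p
            apply hA_anti
            · exact le_trans hL (le_trans (Nat.le_mul_of_pos_left L (Nat.succ_pos _))
                (Nat.le_add_left _ N))
            · have hj : ((Nat.divModEquiv L).symm p : ℕ) = p.1 * L + (p.2 : ℕ) := rfl
              rw [hj, add_mul, one_mul]
              generalize p.1 * L = q
              omega
        _ = ∑' k : ℕ, ∑' _j : Fin L, A (N + (k + 1) * L) :=
            ENNReal.tsum_prod (f := fun (k : ℕ) (_ : Fin L) => A (N + (k + 1) * L))
        _ = ∑' k : ℕ, (L : ENNReal) * A (N + (k + 1) * L) := by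
            congr 1
            funext k
            rw [tsum_fintype]
            simp [Finset.sum_const, mul_comm]
        _ = (L : ENNReal) * S := ENNReal.tsum_mul_left
    rw [htail] at hgroup
    have : (L : ENNReal) * S ≠ ⊤ := ENNReal.mul_ne_top (ENNReal.natCast_ne_top L) hS
    exact this (top_le_iff.mp hgroup)
  -- Step 7: translate to the real sequence g
  set g : ℕ → ℝ := fun k => f ((3:ℝ) ^ (-(N:ℝ) - ((k:ℝ) + 1) * L)) with hgdef
  have hxeq : ∀ k : ℕ, (3:ℝ) ^ (-(N:ℝ) - ((k:ℝ) + 1) * (L:ℝ)) = b (N + (k + 1) * L) := by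
    intro k
    have h1 : (-(N:ℝ) - ((k:ℝ) + 1) * (L:ℝ)) = -((N + (k + 1) * L : ℕ) : ℝ) := by
      push_cast; ring
    rw [h1, Real.rpow_neg (by norm_num), Real.rpow_natCast]
    simp only [hbdef]
    rw [inv_pow]
  have hgk : ∀ k : ℕ, g k = f (b (N + (k + 1) * L)) := by
    intro k; simp only [hgdef]; rw [hxeq k]
  have hmemk : ∀ k : ℕ, b (N + (k + 1) * L) ∈ Ioo (0:ℝ) 1 := by
    intro k
    apply hb_mem
    exact le_trans hL (le_trans (Nat.le_mul_of_pos_left L (Nat.succ_pos _))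
      (Nat.le_add_left _ N))
  have hg_pos : ∀ k, 0 < g k := fun k => (hgk k) ▸ hpos _ (hmemk k)
  have hg_lt1 : ∀ k, g k < 1 := fun k => (hgk k) ▸ hlt1 _ (hmemk k)
  have hnotsum : ¬ Summable g := by
    intro hsum
    have heq : ENNReal.ofReal (∑' k, g k) = ∑' k, ENNReal.ofReal (g k) :=
      ENNReal.ofReal_tsum_of_nonneg (fun k => (hg_pos k).le) hsum
    have : ∑' k, ENNReal.ofReal (g k) = S := by
      simp only [hSdef, hAdef]
      congr 1
      funext k
      rw [hgk k]
    rw [this, hS] at heq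
    exact ENNReal.ofReal_ne_top heq
  have hSsum : Tendsto (fun n : ℕ => ∑ k ∈ Finset.range n, g k) atTop atTop :=
    (not_summable_iff_tendsto_nat_atTop_of_nonneg (fun k => (hg_pos k).le)).mp hnotsum
  -- Step 8: squeeze the product
  have hprod_nonneg : ∀ n : ℕ, 0 ≤ ∏ k ∈ Finset.range n, (1 - c * g k) := by
    intro n
    apply Finset.prod_nonneg
    intro k _
    have : c * g k ≤ 1 := by
      calc c * g k ≤ 1 * 1 := mul_le_mul hc1 (hg_lt1 k).le (hg_pos k).le zero_le_one
        _ = 1 := one_mul 1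
    linarith
  have hprod_le : ∀ n : ℕ, ∏ k ∈ Finset.range n, (1 - c * g k) ≤
      Real.exp (-(c * ∑ k ∈ Finset.range n, g k)) := by
    intro n
    calc ∏ k ∈ Finset.range n, (1 - c * g k)
        ≤ ∏ k ∈ Finset.range n, Real.exp (-(c * g k)) := by
          apply Finset.prod_le_prod
          · intro k _
            have : c * g k ≤ 1 := by
              calc c * g k ≤ 1 * 1 := mul_le_mul hc1 (hg_lt1 k).le (hg_pos k).le zero_le_one
                _ = 1 := one_mul 1
            linarith
          · intro k _
            have := Real.add_one_le_exp (-(c * g k))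
            linarith
      _ = Real.exp (∑ k ∈ Finset.range n, -(c * g k)) := (Real.exp_sum _ _).symm
      _ = Real.exp (-(c * ∑ k ∈ Finset.range n, g k)) := by
          congr 1
          rw [Finset.mul_sum, ← Finset.sum_neg_distrib]
  have hexp0 : Tendsto (fun n : ℕ => Real.exp (-(c * ∑ k ∈ Finset.range n, g k)))
      atTop (𝓝 0) := by
    apply Real.tendsto_exp_atBot.comp
    apply tendsto_neg_atTop_atBot.comp
    exact hSsum.const_mul_atTop hc0
  exact tendsto_of_tendsto_of_tendsto_of_le_of_le tendsto_const_nhds hexp0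
    hprod_nonneg hprod_le
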